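/- Let d ≥ 3 be an integer, let (μ_j)_{j∈ℕ} be a nondecreasing sequence of reals with μ_j ≥ 1/2 for all j and μ_0 > 0, and suppose there exists C > 0 such that #{j : μ_j ≤ μ} ≤ C·μ^{d-1} for all μ > 1. Let Ω be a set and let (u_j)_{j∈ℕ} be functions u_j : Ω → ℂ satisfying |u_j(y)| ≤ C·μ_j^{(d-1)/2} for all j and all y ∈ Ω. Then there exists a constant C' > 0 such that for all y, y' ∈ Ω and all reals r, r' > 0 with r' ≥ 4r, the series ∑_{j} |u_j(y)| · |u_j(y')| · I_{μ_j}(r) · K_{μ_j}(r') converges and its sum is at most C' · (2r/r')^{μ_0} · e^{-r'/4}. -/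

import Mathlib

open Real

/-- The modified Bessel function of the first kind, via the Poisson integral representation
`I_μ(r) = (2^{-μ} r^{μ} / (π^{1/2} Γ(μ + 1/2))) · ∫_{-1}^{1} (1 - t²)^{μ - 1/2} e^{-rt} dt`. -/
noncomputable def besselI (μ r : ℝ) : ℝ :=
  (2 ^ (-μ) * r ^ μ / (Real.sqrt π * Real.Gamma (μ + 1 / 2))) *
    ∫ t in (-1 : ℝ)..1, (1 - t ^ 2) ^ (μ - 1 / 2) * Real.exp (-r * t)

/-- The modified Bessel function of the second kind, via the integral representation
`K_μ(r) = (π^{1/2} 2^{-μ} r^{μ} / Γ(μ + 1/2)) · ∫_{1}^{∞} e^{-rt} (t² - 1)^{μ - 1/2} dt`. -/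
noncomputable def besselK (μ r : ℝ) : ℝ :=
  (Real.sqrt π * 2 ^ (-μ) * r ^ μ / Real.Gamma (μ + 1 / 2)) *
    ∫ t in Set.Ioi (1 : ℝ), Real.exp (-r * t) * (t ^ 2 - 1) ^ (μ - 1 / 2)

/-!
For `4r ≤ r'` each product `I_μ(r) K_μ(r')` is at most `4 (4r/r')^{μ₀} 2^{-μ} e^{-r'/4}`, so the
series is dominated by `∑ⱼ μⱼ^{d-1} 2^{-μⱼ}` times the claimed bound. The integral defining
`I_μ(r)` is at most `2 e^r`. In the one defining `K_μ(r')`, substituting `t = 1 + s` and splitting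
`(2s + s²)^a ≤ 4^a s^a + 2^a s^{2a}` gives two Euler integrals; the first is controlled by
`y^a e^{-y} ≤ Γ(a + 1)`, the second by Legendre's duplication formula and log-convexity of `Γ`.
Finally, Weyl's law forces `j + 1 ≲ μⱼ^{d-1}`, so the weights `μⱼ^{d-1} 2^{-μⱼ}` are dominated
by `1/(j + 1)²`.
-/

open MeasureTheory Set

theorem rpow_mul_exp_neg_le_Gamma_add_one {a y : ℝ} (ha : 0 ≤ a) (hy : 0 ≤ y) :
    y ^ a * exp (-y) ≤ Gamma (a + 1) := by
  have hint : IntegrableOn (fun x ↦ exp (-x) * x ^ a) (Ioi 0) := by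
    simpa using GammaIntegral_convergent (s := a + 1) (by linarith)
  have hexp : IntegrableOn (fun x ↦ exp (-x)) (Ioi y) := by
    simpa using exp_neg_integrableOn_Ioi y one_pos
  calc y ^ a * exp (-y) = ∫ x in Ioi y, exp (-x) * y ^ a := by
        rw [integral_mul_const, integral_exp_neg_Ioi, mul_comm]
    _ ≤ ∫ x in Ioi y, exp (-x) * x ^ a :=
        setIntegral_mono_on (hexp.mul_const _) (hint.mono_set (Ioi_subset_Ioi hy))
          measurableSet_Ioi fun x hx ↦
          mul_le_mul_of_nonneg_left (rpow_le_rpow hy (le_of_lt hx) ha) (exp_nonneg _)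
    _ ≤ ∫ x in Ioi 0, exp (-x) * x ^ a :=
        setIntegral_mono_set hint
          ((ae_restrict_mem measurableSet_Ioi).mono fun x (hx : 0 < x) ↦ by positivity)
          (Ioi_subset_Ioi hy).eventuallyLE
    _ = Gamma (a + 1) := by rw [Gamma_eq_integral (by linarith)]; simp

theorem Gamma_le_two_mul_Gamma_add_half {μ : ℝ} (hμ : 1 / 2 ≤ μ) :
    Gamma μ ≤ 2 * Gamma (μ + 1 / 2) := by
  have hμ0 : 0 < μ := by linarith
  have hG : 0 < Gamma (μ + 1 / 2) := Gamma_pos_of_pos (by linarith)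
  -- log-convexity at the midpoint `μ + 1` of `μ + 1/2` and `μ + 3/2`
  have hconv := Gamma_mul_add_mul_le_rpow_Gamma_mul_rpow_Gamma (s := μ + 1 / 2)
    (t := μ + 1 / 2 + 1) (by linarith) (by linarith) one_half_pos one_half_pos (by norm_num)
  rw [Gamma_add_one (by linarith), mul_rpow (by linarith) hG.le, mul_comm _ (Gamma _ ^ _),
    ← mul_assoc, ← rpow_add hG,
    show (1 / 2 : ℝ) * (μ + 1 / 2) + 1 / 2 * (μ + 1 / 2 + 1) = μ + 1 by ring,
    Gamma_add_one hμ0.ne', show (1 / 2 : ℝ) + 1 / 2 = 1 by norm_num, rpow_one] at hconv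
  have hsqrt : (μ + 1 / 2) ^ (1 / 2 : ℝ) ≤ 2 * μ := by
    rw [← sqrt_eq_rpow, sqrt_le_left (by linarith)]
    nlinarith
  refine le_of_mul_le_mul_left ?_ hμ0
  calc μ * Gamma μ ≤ Gamma (μ + 1 / 2) * (μ + 1 / 2) ^ (1 / 2 : ℝ) := hconv
    _ ≤ Gamma (μ + 1 / 2) * (2 * μ) := by gcongr
    _ = μ * (2 * Gamma (μ + 1 / 2)) := by ring

theorem Gamma_two_mul_le {μ : ℝ} (hμ : 1 / 2 ≤ μ) :
    Gamma (2 * μ) ≤ 4 ^ μ * Gamma (μ + 1 / 2) ^ 2 / √π := by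
  have h2 : (2 : ℝ) ^ (1 - 2 * μ) * 4 ^ μ = 2 := by
    rw [show (4 : ℝ) = 2 ^ (2 : ℝ) by norm_num, ← rpow_mul zero_le_two, ← rpow_add two_pos]
    norm_num
  have hG := (Gamma_pos_of_pos (by linarith : 0 < μ + 1 / 2)).le
  rw [le_div_iff₀ (sqrt_pos.2 pi_pos)]
  calc Gamma (2 * μ) * √π = 4 ^ μ * (Gamma μ * Gamma (μ + 1 / 2)) / 2 := by
        rw [Gamma_mul_Gamma_add_half]
        linear_combination -(Gamma (2 * μ) * √π / 2) * h2
    _ ≤ 4 ^ μ * (2 * Gamma (μ + 1 / 2) * Gamma (μ + 1 / 2)) / 2 := by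
        gcongr
        exact Gamma_le_two_mul_Gamma_add_half hμ
    _ = 4 ^ μ * Gamma (μ + 1 / 2) ^ 2 := by ring

theorem add_rpow_le_two_rpow_mul_rpow_add_rpow {x y a : ℝ} (hx : 0 ≤ x) (hy : 0 ≤ y)
    (ha : 0 ≤ a) : (x + y) ^ a ≤ 2 ^ a * (x ^ a + y ^ a) := by
  wlog hxy : y ≤ x generalizing x y
  · simpa only [add_comm] using this hy hx (by linarith)
  calc (x + y) ^ a ≤ (2 * x) ^ a := rpow_le_rpow (by positivity) (by linarith) ha
    _ = 2 ^ a * x ^ a := mul_rpow zero_le_two hx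
    _ ≤ 2 ^ a * (x ^ a + y ^ a) := by gcongr; exact le_add_of_nonneg_right (by positivity)

theorem rpow_le_two_mul_rpow_mul_half_rpow {q ν μ : ℝ} (hq : 0 < q) (hq2 : q ≤ 1 / 2)
    (hνμ : ν ≤ μ) : q ^ μ ≤ (2 * q) ^ ν * (1 / 2) ^ μ := by
  calc q ^ μ = q ^ ν * q ^ (μ - ν) := by rw [← rpow_add hq]; ring_nf
    _ ≤ q ^ ν * (1 / 2) ^ (μ - ν) := by gcongr
    _ = (2 * q) ^ ν * (1 / 2) ^ μ := by
        rw [rpow_sub one_half_pos, mul_rpow zero_le_two hq.le, one_div, inv_rpow zero_le_two,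
          inv_rpow zero_le_two]
        field_simp

theorem mul_le_sq_mul_rpow {a b C μ p : ℝ} (hμ : 0 < μ) (hb : 0 ≤ b)
    (ha : a ≤ C * μ ^ (p / 2)) (hb' : b ≤ C * μ ^ (p / 2)) : a * b ≤ C ^ 2 * μ ^ p := by
  calc a * b ≤ (C * μ ^ (p / 2)) * (C * μ ^ (p / 2)) := mul_le_mul ha hb' hb (hb.trans hb')
    _ = C ^ 2 * μ ^ p := by rw [mul_mul_mul_comm, ← rpow_add hμ, add_halves, sq]

theorem integral_comp_add_right_Ioi (g : ℝ → ℝ) (a b : ℝ) :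
    ∫ x in Ioi a, g (x + b) = ∫ x in Ioi (a + b), g x := by
  rw [← (measurePreserving_add_right volume b).setIntegral_preimage_emb
    (measurableEmbedding_addRight b) g (Ioi (a + b)), preimage_add_const_Ioi, add_sub_cancel_right]

theorem integrableOn_rpow_sub_one_mul_exp_neg_mul {b y : ℝ} (hb : 0 < b) (hy : 0 < y) :
    IntegrableOn (fun s ↦ s ^ (b - 1) * exp (-(y * s))) (Ioi 0) := by
  simpa using integrableOn_rpow_mul_exp_neg_mul_rpow (p := 1) (by linarith : -1 < b - 1) one_pos hy

theorem integral_one_sub_sq_rpow_mul_exp_le {a x : ℝ} (ha : 0 ≤ a) (hx : 0 ≤ x) :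
    ∫ t in (-1 : ℝ)..1, (1 - t ^ 2) ^ a * exp (-x * t) ≤ 2 * exp x := by
  have hbound : ∀ t ∈ uIoc (-1 : ℝ) 1, ‖(1 - t ^ 2) ^ a * exp (-x * t)‖ ≤ exp x := by
    intro t ht
    rw [uIoc_of_le (by norm_num)] at ht
    have ht2 : 0 ≤ 1 - t ^ 2 := by nlinarith [ht.1, ht.2]
    rw [norm_of_nonneg (by positivity)]
    calc (1 - t ^ 2) ^ a * exp (-x * t) ≤ 1 * exp x := by
          gcongr
          · exact rpow_le_one ht2 (by nlinarith) ha
          · nlinarith [ht.1, ht.2]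
      _ = exp x := one_mul _
  calc ∫ t in (-1 : ℝ)..1, (1 - t ^ 2) ^ a * exp (-x * t)
      ≤ ‖∫ t in (-1 : ℝ)..1, (1 - t ^ 2) ^ a * exp (-x * t)‖ := le_norm_self _
    _ ≤ exp x * |1 - (-1)| := intervalIntegral.norm_integral_le_of_norm_le_const hbound
    _ = 2 * exp x := by norm_num; ring

theorem integral_exp_mul_sq_sub_one_rpow_le {a y : ℝ} (ha : 0 ≤ a) (hy : 0 < y) :
    ∫ t in Ioi 1, exp (-y * t) * (t ^ 2 - 1) ^ a ≤
      exp (-y) * (4 ^ a * ((1 / y) ^ (a + 1) * Gamma (a + 1)) +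
        2 ^ a * ((1 / y) ^ (2 * a + 1) * Gamma (2 * a + 1))) := by
  set g : ℝ → ℝ → ℝ := fun b s ↦ s ^ (b - 1) * exp (-(y * s))
  have hg : ∀ b, 0 < b → IntegrableOn (g b) (Ioi 0) := fun b hb ↦
    integrableOn_rpow_sub_one_mul_exp_neg_mul hb hy
  have hpoint : ∀ s ∈ Ioi (0 : ℝ), exp (-y * (s + 1)) * ((s + 1) ^ 2 - 1) ^ a ≤
      exp (-y) * (4 ^ a * g (a + 1) s + 2 ^ a * g (2 * a + 1) s) := by
    intro s (hs : 0 < s)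
    have hsplit : ((s + 1) ^ 2 - 1) ^ a ≤ 4 ^ a * s ^ a + 2 ^ a * s ^ (2 * a) := by
      calc ((s + 1) ^ 2 - 1) ^ a = (2 * s + s ^ 2) ^ a := by ring_nf
        _ ≤ 2 ^ a * ((2 * s) ^ a + (s ^ 2) ^ a) :=
          add_rpow_le_two_rpow_mul_rpow_add_rpow (by positivity) (by positivity) ha
        _ = 4 ^ a * s ^ a + 2 ^ a * s ^ (2 * a) := by
          rw [mul_rpow zero_le_two hs.le, ← rpow_natCast, ← rpow_mul hs.le,
            show (4 : ℝ) = 2 * 2 by norm_num, mul_rpow zero_le_two zero_le_two]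
          push_cast; ring_nf
    calc exp (-y * (s + 1)) * ((s + 1) ^ 2 - 1) ^ a
        ≤ exp (-y * (s + 1)) * (4 ^ a * s ^ a + 2 ^ a * s ^ (2 * a)) := by gcongr
      _ = exp (-y) * (4 ^ a * g (a + 1) s + 2 ^ a * g (2 * a + 1) s) := by
        simp only [g, add_sub_cancel_right]
        rw [show -y * (s + 1) = -y + -(y * s) by ring, exp_add]
        ring
  have hshift := integral_comp_add_right_Ioi (fun t ↦ exp (-y * t) * (t ^ 2 - 1) ^ a) 0 1
  rw [zero_add] at hshift
  rw [← hshift]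
  calc ∫ s in Ioi 0, exp (-y * (s + 1)) * ((s + 1) ^ 2 - 1) ^ a
      ≤ ∫ s in Ioi 0, exp (-y) * (4 ^ a * g (a + 1) s + 2 ^ a * g (2 * a + 1) s) := by
        refine integral_mono_of_nonneg ?_ ?_ ((ae_restrict_mem measurableSet_Ioi).mono hpoint)
        · filter_upwards [ae_restrict_mem measurableSet_Ioi] with s (hs : 0 < s)
          have : 0 ≤ (s + 1) ^ 2 - 1 := by nlinarith
          positivity
        · exact (((hg _ (by linarith)).const_mul _).add
            ((hg _ (by linarith)).const_mul _)).const_mul _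
    _ = _ := by
        rw [integral_const_mul, integral_add ((hg _ (by linarith)).const_mul _)
          ((hg _ (by linarith)).const_mul _), integral_const_mul, integral_const_mul,
          integral_rpow_mul_exp_neg_mul_Ioi (by linarith) hy,
          integral_rpow_mul_exp_neg_mul_Ioi (by linarith) hy]

theorem besselI_nonneg {μ x : ℝ} (hμ : 1 / 2 ≤ μ) (hx : 0 ≤ x) : 0 ≤ besselI μ x := by
  have hG : 0 < Gamma (μ + 1 / 2) := Gamma_pos_of_pos (by linarith)
  refine mul_nonneg (by positivity) (intervalIntegral.integral_nonneg (by norm_num) fun t ht ↦ ?_)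
  have : 0 ≤ 1 - t ^ 2 := by nlinarith [ht.1, ht.2]
  positivity

theorem besselK_nonneg {μ y : ℝ} (hμ : 1 / 2 ≤ μ) (hy : 0 ≤ y) : 0 ≤ besselK μ y := by
  have hG : 0 < Gamma (μ + 1 / 2) := Gamma_pos_of_pos (by linarith)
  refine mul_nonneg (by positivity) (setIntegral_nonneg measurableSet_Ioi fun t (ht : 1 < t) ↦ ?_)
  have : 0 ≤ t ^ 2 - 1 := by nlinarith
  positivity

theorem besselI_le {μ x : ℝ} (hμ : 1 / 2 ≤ μ) (hx : 0 ≤ x) :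
    besselI μ x ≤ 2 * exp x * (x / 2) ^ μ / (√π * Gamma (μ + 1 / 2)) := by
  have hG : 0 < Gamma (μ + 1 / 2) := Gamma_pos_of_pos (by linarith)
  calc besselI μ x ≤ 2 ^ (-μ) * x ^ μ / (√π * Gamma (μ + 1 / 2)) * (2 * exp x) := by
        unfold besselI
        gcongr
        exact integral_one_sub_sq_rpow_mul_exp_le (by linarith) hx
    _ = 2 * exp x * (x / 2) ^ μ / (√π * Gamma (μ + 1 / 2)) := by
        rw [div_rpow hx zero_le_two, rpow_neg zero_le_two]
        ring

theorem integral_exp_mul_sq_sub_one_rpow_sub_half_le {μ y : ℝ} (hμ : 1 / 2 ≤ μ) (hy : 0 < y) :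
    ∫ t in Ioi 1, exp (-y * t) * (t ^ 2 - 1) ^ (μ - 1 / 2) ≤
      2 * (4 ^ μ * 2 ^ μ * Gamma (μ + 1 / 2) ^ 2 * (1 / y) ^ (2 * μ) * exp (-y / 2)) := by
  set G := Gamma (μ + 1 / 2)
  have hG : 0 < G := Gamma_pos_of_pos (by linarith)
  have hJ := integral_exp_mul_sq_sub_one_rpow_le (a := μ - 1 / 2) (by linarith) hy
  rw [show μ - 1 / 2 + 1 = μ + 1 / 2 by ring, show 2 * (μ - 1 / 2) + 1 = 2 * μ by ring] at hJ
  set B := 4 ^ μ * 2 ^ μ * G ^ 2 * (1 / y) ^ (2 * μ) * exp (-y / 2)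
  have hnear : exp (-y) * (4 ^ (μ - 1 / 2) * ((1 / y) ^ (μ + 1 / 2) * G)) ≤ B := by
    have hsplit : (1 / y) ^ (μ + 1 / 2) =
        (1 / y) ^ (2 * μ) * (2 ^ (μ - 1 / 2) * (y / 2) ^ (μ - 1 / 2)) := by
      rw [← mul_rpow zero_le_two (by positivity), mul_div_cancel₀ y two_ne_zero, one_div,
        inv_rpow hy.le, inv_rpow hy.le, ← rpow_neg hy.le, ← rpow_neg hy.le, ← rpow_add hy]
      ring_nf
    have hexp : exp (-y) = exp (-y / 2) * exp (-(y / 2)) := by rw [← exp_add]; ring_nf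
    have hsup := rpow_mul_exp_neg_le_Gamma_add_one (a := μ - 1 / 2) (y := y / 2)
      (by linarith) (by positivity)
    rw [show μ - 1 / 2 + 1 = μ + 1 / 2 by ring] at hsup
    rw [hsplit, hexp]
    calc exp (-y / 2) * exp (-(y / 2)) * (4 ^ (μ - 1 / 2) * ((1 / y) ^ (2 * μ) *
          (2 ^ (μ - 1 / 2) * (y / 2) ^ (μ - 1 / 2)) * G))
        = 4 ^ (μ - 1 / 2) * 2 ^ (μ - 1 / 2) * G * (1 / y) ^ (2 * μ) * exp (-y / 2) *
          ((y / 2) ^ (μ - 1 / 2) * exp (-(y / 2))) := by ring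
      _ ≤ 4 ^ μ * 2 ^ μ * G * (1 / y) ^ (2 * μ) * exp (-y / 2) * G := by
        gcongr <;> norm_num
      _ = B := by ring
  have hfar : exp (-y) * (2 ^ (μ - 1 / 2) * ((1 / y) ^ (2 * μ) * Gamma (2 * μ))) ≤ B := by
    have hπ : 1 ≤ √π := one_le_sqrt.2 (by linarith [pi_gt_three])
    calc exp (-y) * (2 ^ (μ - 1 / 2) * ((1 / y) ^ (2 * μ) * Gamma (2 * μ)))
        ≤ exp (-y / 2) * (2 ^ μ * ((1 / y) ^ (2 * μ) * (4 ^ μ * G ^ 2))) := by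
          gcongr
          · linarith
          · norm_num
          · linarith
          · exact (Gamma_two_mul_le hμ).trans (div_le_self (by positivity) hπ)
      _ = B := by ring
  linarith

theorem besselK_le {μ y : ℝ} (hμ : 1 / 2 ≤ μ) (hy : 0 < y) :
    besselK μ y ≤ 2 * √π * Gamma (μ + 1 / 2) * (4 / y) ^ μ * exp (-y / 2) := by
  have hJ := integral_exp_mul_sq_sub_one_rpow_sub_half_le hμ hy
  set G := Gamma (μ + 1 / 2)
  have hG : 0 < G := Gamma_pos_of_pos (by linarith)
  unfold besselK
  calc √π * 2 ^ (-μ) * y ^ μ / G * ∫ t in Ioi 1, exp (-y * t) * (t ^ 2 - 1) ^ (μ - 1 / 2)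
      ≤ √π * 2 ^ (-μ) * y ^ μ / G *
          (2 * (4 ^ μ * 2 ^ μ * G ^ 2 * (1 / y) ^ (2 * μ) * exp (-y / 2))) := by gcongr
    _ = 2 * √π * G * (4 / y) ^ μ * exp (-y / 2) := by
      rw [rpow_neg zero_le_two, two_mul μ, rpow_add (by positivity), div_eq_mul_one_div 4 y,
        mul_rpow (by norm_num) (by positivity), one_div, inv_rpow hy.le]
      field_simp

theorem besselI_mul_besselK_le {μ ν x y : ℝ} (hμ : 1 / 2 ≤ μ) (hνμ : ν ≤ μ) (hx : 0 < x)
    (hxy : 4 * x ≤ y) :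
    besselI μ x * besselK μ y ≤ 4 * (4 * x / y) ^ ν * (1 / 2) ^ μ * exp (-y / 4) := by
  have hy : 0 < y := by linarith
  have hG : 0 < Gamma (μ + 1 / 2) := Gamma_pos_of_pos (by linarith)
  calc besselI μ x * besselK μ y
      ≤ 2 * exp x * (x / 2) ^ μ / (√π * Gamma (μ + 1 / 2)) *
          (2 * √π * Gamma (μ + 1 / 2) * (4 / y) ^ μ * exp (-y / 2)) :=
        mul_le_mul (besselI_le hμ hx.le) (besselK_le hμ hy) (besselK_nonneg hμ hy.le)
          (by positivity)
    _ = 4 * (2 * x / y) ^ μ * exp (x + -y / 2) := by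
        rw [show 2 * x / y = x / 2 * (4 / y) by field_simp; ring,
          mul_rpow (by positivity) (by positivity), exp_add]
        field_simp
        ring
    _ ≤ 4 * ((4 * x / y) ^ ν * (1 / 2) ^ μ) * exp (-y / 4) := by
        gcongr
        · rw [show 4 * x / y = 2 * (2 * x / y) by ring]
          exact rpow_le_two_mul_rpow_mul_half_rpow (by positivity)
            (by rw [div_le_iff₀ hy]; linarith) hνμ
        · linarith
    _ = 4 * (4 * x / y) ^ ν * (1 / 2) ^ μ * exp (-y / 4) := by ring

theorem succ_le_ncard_setOf_le {μs : ℕ → ℝ} (hmono : Monotone μs) {m : ℝ}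
    (hfin : {i | μs i ≤ m}.Finite) {j : ℕ} (hj : μs j ≤ m) : j + 1 ≤ {i | μs i ≤ m}.ncard := by
  calc j + 1 = (↑(Finset.range (j + 1)) : Set ℕ).ncard := by simp
    _ ≤ {i | μs i ≤ m}.ncard := ncard_le_ncard (fun i hi ↦
        (hmono (Nat.lt_succ_iff.1 (Finset.mem_range.1 hi))).trans hj) hfin

theorem summable_rpow_mul_exp_neg_mul_of_succ_le {μs : ℕ → ℝ} {p q B : ℝ}
    (hμ : ∀ j, 0 < μs j) (hp : 0 ≤ p) (hq : 0 < q) (hB : ∀ j : ℕ, (j + 1 : ℝ) ≤ B * μs j ^ p) :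
    Summable fun j ↦ μs j ^ p * exp (-(q * μs j)) := by
  set M := B ^ 2 * (Gamma (3 * p + 1) / q ^ (3 * p))
  have hsq : Summable fun j : ℕ ↦ 1 / ((j : ℝ) + 1) ^ 2 := by
    simpa using (summable_nat_add_iff 1).2 (Real.summable_one_div_nat_pow.2 one_lt_two)
  refine (hsq.mul_left M).of_nonneg_of_le (fun j ↦ by have := hμ j; positivity) fun j ↦ ?_
  have hμj := hμ j
  -- `μ ^ (3p) e^{-qμ}` is bounded, and `μ ^ (2p)` grows at least like `(j + 1) ^ 2`
  have hsup : μs j ^ (3 * p) * exp (-(q * μs j)) ≤ Gamma (3 * p + 1) / q ^ (3 * p) := by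
    rw [le_div_iff₀ (by positivity), mul_right_comm, ← mul_rpow hμj.le hq.le, mul_comm (μs j)]
    exact rpow_mul_exp_neg_le_Gamma_add_one (by positivity) (by positivity)
  have hgrow : ((j : ℝ) + 1) ^ 2 ≤ B ^ 2 * μs j ^ (2 * p) := by
    rw [mul_comm 2 p, rpow_mul hμj.le, rpow_two, ← mul_pow]
    exact pow_le_pow_left₀ (by positivity) (hB j) 2
  rw [mul_one_div, le_div_iff₀ (by positivity)]
  calc μs j ^ p * exp (-(q * μs j)) * ((j : ℝ) + 1) ^ 2
      ≤ μs j ^ p * exp (-(q * μs j)) * (B ^ 2 * μs j ^ (2 * p)) := by gcongr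
    _ = B ^ 2 * (μs j ^ (3 * p) * exp (-(q * μs j))) := by
        rw [show 3 * p = p + 2 * p by ring, rpow_add hμj]; ring
    _ ≤ M := mul_le_mul_of_nonneg_left hsup (sq_nonneg B)

theorem succ_le_mul_rpow_of_ncard_le {μs : ℕ → ℝ} {C p : ℝ} (hmono : Monotone μs)
    (hμ : ∀ j, 1 / 2 ≤ μs j)
    (hcount : ∀ m : ℝ, 1 < m →
      {j : ℕ | μs j ≤ m}.Finite ∧ (({j : ℕ | μs j ≤ m}.ncard : ℝ) ≤ C * m ^ p)) (j : ℕ) :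
    (j + 1 : ℝ) ≤ C * 3 ^ p * μs j ^ p := by
  obtain ⟨hfin, hcard⟩ := hcount (3 * μs j) (by linarith [hμ j])
  calc (j + 1 : ℝ) ≤ {i | μs i ≤ 3 * μs j}.ncard := by
        exact_mod_cast succ_le_ncard_setOf_le hmono hfin (by linarith [hμ j])
    _ ≤ C * (3 * μs j) ^ p := hcard
    _ = C * 3 ^ p * μs j ^ p := by rw [mul_rpow (by norm_num) (by linarith [hμ j])]; ring

theorem summable_rpow_mul_half_rpow_of_ncard_le {μs : ℕ → ℝ} {C p : ℝ} (hmono : Monotone μs)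
    (hμ : ∀ j, 1 / 2 ≤ μs j) (hp : 0 ≤ p)
    (hcount : ∀ m : ℝ, 1 < m →
      {j : ℕ | μs j ≤ m}.Finite ∧ (({j : ℕ | μs j ≤ m}.ncard : ℝ) ≤ C * m ^ p)) :
    Summable fun j ↦ μs j ^ p * (1 / 2) ^ μs j := by
  simp_rw [rpow_def_of_pos one_half_pos (μs _), one_div, log_inv, neg_mul]
  exact summable_rpow_mul_exp_neg_mul_of_succ_le (fun j ↦ by linarith [hμ j]) hp
    (log_pos one_lt_two) (succ_le_mul_rpow_of_ncard_le hmono hμ hcount)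

theorem mul_mul_besselI_mul_besselK_le {a a' C p μ ν x y : ℝ} (hμ : 1 / 2 ≤ μ) (hνμ : ν ≤ μ)
    (hx : 0 < x) (hxy : 4 * x ≤ y) (ha' : 0 ≤ a') (ha_le : a ≤ C * μ ^ (p / 2))
    (ha'_le : a' ≤ C * μ ^ (p / 2)) :
    a * a' * besselI μ x * besselK μ y ≤
      4 * C ^ 2 * (μ ^ p * (1 / 2) ^ μ) * ((4 * x / y) ^ ν * exp (-y / 4)) := by
  have hμ0 : 0 < μ := by linarith
  calc a * a' * besselI μ x * besselK μ y = a * a' * (besselI μ x * besselK μ y) := by ring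
    _ ≤ C ^ 2 * μ ^ p * (4 * (4 * x / y) ^ ν * (1 / 2) ^ μ * exp (-y / 4)) :=
      mul_le_mul (mul_le_sq_mul_rpow hμ0 ha' ha_le ha'_le)
        (besselI_mul_besselK_le hμ hνμ hx hxy)
        (mul_nonneg (besselI_nonneg hμ hx.le) (besselK_nonneg hμ (by linarith)))
        (by positivity)
    _ = 4 * C ^ 2 * (μ ^ p * (1 / 2) ^ μ) * ((4 * x / y) ^ ν * exp (-y / 4)) := by ring

theorem summable_and_tsum_le_of_le_mul {f b : ℕ → ℝ} {X : ℝ} (hf : ∀ j, 0 ≤ f j)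
    (hfb : ∀ j, f j ≤ b j * X) (hb : Summable b) : Summable f ∧ ∑' j, f j ≤ (∑' j, b j) * X := by
  have hf_sum := (hb.mul_right X).of_nonneg_of_le hf hfb
  exact ⟨hf_sum, (hf_sum.tsum_le_tsum hfb (hb.mul_right X)).trans_eq tsum_mul_right⟩

theorem statement12_general (d : ℕ) (hd : 3 ≤ d) (μs : ℕ → ℝ) (hmono : Monotone μs)
    (hμhalf : ∀ j, (1 / 2 : ℝ) ≤ μs j)
    (C : ℝ)
    (hcount : ∀ m : ℝ, 1 < m →
      {j : ℕ | μs j ≤ m}.Finite ∧ (({j : ℕ | μs j ≤ m}.ncard : ℝ) ≤ C * m ^ ((d : ℝ) - 1)))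
    {Ω : Type*} (u : ℕ → Ω → ℂ)
    (hu : ∀ (j : ℕ) (y : Ω), ‖u j y‖ ≤ C * (μs j) ^ (((d : ℝ) - 1) / 2)) :
    ∃ C' : ℝ, 0 < C' ∧ ∀ (y y' : Ω) (r r' : ℝ), 0 < r → 0 < r' → 4 * r ≤ r' →
      Summable (fun j : ℕ =>
        ‖u j y‖ * ‖u j y'‖ * besselI (μs j) r * besselK (μs j) r') ∧
      (∑' j : ℕ,
          ‖u j y‖ * ‖u j y'‖ * besselI (μs j) r * besselK (μs j) r')
        ≤ C' * (2 * r / r') ^ (μs 0) * Real.exp (-r' / 4) := by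
  have hp : 0 ≤ (d : ℝ) - 1 := by
    have : (3 : ℝ) ≤ d := by exact_mod_cast hd
    linarith
  set b : ℕ → ℝ := fun j ↦ 4 * C ^ 2 * (μs j ^ ((d : ℝ) - 1) * (1 / 2) ^ μs j)
  have hb : Summable b :=
    (summable_rpow_mul_half_rpow_of_ncard_le hmono hμhalf hp hcount).mul_left _
  have hB : 0 ≤ ∑' j, b j := tsum_nonneg fun j ↦ by have := hμhalf j; positivity
  refine ⟨2 ^ μs 0 * (∑' j, b j + 1), by positivity, fun y y' r r' hr hr' hrr ↦ ?_⟩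
  obtain ⟨hsum, hle⟩ := summable_and_tsum_le_of_le_mul
    (fun j ↦ mul_nonneg (mul_nonneg (by positivity) (besselI_nonneg (hμhalf j) hr.le))
      (besselK_nonneg (hμhalf j) hr'.le))
    (fun j ↦ mul_mul_besselI_mul_besselK_le (hμhalf j) (hmono (Nat.zero_le j)) hr hrr
      (norm_nonneg _) (hu j y) (hu j y')) hb
  refine ⟨hsum, hle.trans ?_⟩
  rw [show 4 * r / r' = 2 * (2 * r / r') by ring, mul_rpow zero_le_two (by positivity)]
  calc (∑' j, b j) * (2 ^ μs 0 * (2 * r / r') ^ μs 0 * exp (-r' / 4))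
      = 2 ^ μs 0 * (∑' j, b j) * (2 * r / r') ^ μs 0 * exp (-r' / 4) := by ring
    _ ≤ 2 ^ μs 0 * (∑' j, b j + 1) * (2 * r / r') ^ μs 0 * exp (-r' / 4) := by
        gcongr; linarith

/-- Let `d ≥ 3`, let `(μ_j)` be a nondecreasing sequence of reals with
`μ_j ≥ 1/2` and `μ_0 > 0`, satisfying the Weyl-type counting bound `#{j : μ_j ≤ m} ≤ C·m^{d-1}`
for `m > 1`, and let `u_j : Ω → ℂ` satisfy `|u_j(y)| ≤ C·μ_j^{(d-1)/2}`. Then there is `C' > 0`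
such that for all `y, y' ∈ Ω` and `r' ≥ 4r > 0` the series
`∑_j |u_j(y)|·|u_j(y')|·I_{μ_j}(r)·K_{μ_j}(r')` converges with sum at most
`C' · (2r/r')^{μ_0} · e^{-r'/4}`. -/
theorem statement12 (d : ℕ) (hd : 3 ≤ d) (μs : ℕ → ℝ) (hmono : Monotone μs)
    (hμhalf : ∀ j, (1 / 2 : ℝ) ≤ μs j) (hμ0 : 0 < μs 0)
    (C : ℝ) (hC : 0 < C)
    (hcount : ∀ m : ℝ, 1 < m →
      {j : ℕ | μs j ≤ m}.Finite ∧ (({j : ℕ | μs j ≤ m}.ncard : ℝ) ≤ C * m ^ ((d : ℝ) - 1)))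
    {Ω : Type*} (u : ℕ → Ω → ℂ)
    (hu : ∀ (j : ℕ) (y : Ω), ‖u j y‖ ≤ C * (μs j) ^ (((d : ℝ) - 1) / 2)) :
    ∃ C' : ℝ, 0 < C' ∧ ∀ (y y' : Ω) (r r' : ℝ), 0 < r → 0 < r' → 4 * r ≤ r' →
      Summable (fun j : ℕ =>
        ‖u j y‖ * ‖u j y'‖ * besselI (μs j) r * besselK (μs j) r') ∧
      (∑' j : ℕ,
          ‖u j y‖ * ‖u j y'‖ * besselI (μs j) r * besselK (μs j) r')
        ≤ C' * (2 * r / r') ^ (μs 0) * Real.exp (-r' / 4) :=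
  statement12_general d hd μs hmono hμhalf C hcount u hu
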